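/- The integral of ξ(t) = (cos²t + 2t·sin t·cos t + t² − π²/4)/cos²t over the interval (−π/2, π/2) equals −π. -/

import Mathlib

open Real

noncomputable def xi (t : ℝ) : ℝ :=
  (Real.cos t ^ 2 + 2 * t * Real.sin t * Real.cos t + t ^ 2 - π ^ 2 / 4) / Real.cos t ^ 2

/-!
On `(-π/2, π/2)`, `xi` is the derivative of `F t = t + (t² - π²/4) tan t`. Since
`(t - π/2) / cos t → -1` as `t → π/2` (the reciprocal slope of `cos` there), `F` tends to `∓π/2`
at `±π/2`; and `xi` tends to `0` at `±π/2` by L'Hôpital, the numerator having derivative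
`4 t cos² t`. So `xi` is continuous on the closed interval and its integral is
`-π/2 - π/2 = -π`.
-/

open Filter Topology Set

noncomputable def xiPrimitive (t : ℝ) : ℝ := t + (t ^ 2 - π ^ 2 / 4) * tan t

lemma xi_neg (t : ℝ) : xi (-t) = xi t := by
  simp only [xi, cos_neg, sin_neg]
  ring

lemma xiPrimitive_neg (t : ℝ) : xiPrimitive (-t) = -xiPrimitive t := by
  simp only [xiPrimitive, tan_neg]
  ring

lemma hasDerivAt_xiPrimitive {x : ℝ} (hx : cos x ≠ 0) : HasDerivAt xiPrimitive (xi x) x := by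
  have hpoly : HasDerivAt (fun t : ℝ => t ^ 2 - π ^ 2 / 4) (2 * x) x := by
    simpa using (hasDerivAt_pow 2 x).sub_const (π ^ 2 / 4)
  refine ((hasDerivAt_id' x).add (hpoly.fun_mul (hasDerivAt_tan hx))).congr_deriv ?_
  rw [xi, tan_eq_sin_div_cos]
  field_simp
  ring

lemma hasDerivAt_xi_numerator (x : ℝ) :
    HasDerivAt (fun t => cos t ^ 2 + 2 * t * sin t * cos t + t ^ 2 - π ^ 2 / 4)
      (4 * x * cos x ^ 2) x := by
  have h := ((((hasDerivAt_cos x).fun_pow 2).add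
    ((((hasDerivAt_id' x).const_mul 2).fun_mul (hasDerivAt_sin x)).fun_mul
      (hasDerivAt_cos x))).add (hasDerivAt_pow 2 x)).sub_const (π ^ 2 / 4)
  refine h.congr_deriv ?_
  push_cast
  linear_combination (-2 * x) * sin_sq_add_cos_sq x

lemma eventually_cos_ne_zero_nhdsNE_pi_div_two : ∀ᶠ t in 𝓝[≠] (π / 2), cos t ≠ 0 := by
  simpa using (hasDerivAt_cos (π / 2)).eventually_ne (c := 0) (by simp)

lemma tendsto_sub_pi_div_two_div_cos :
    Tendsto (fun t => (t - π / 2) / cos t) (𝓝[≠] (π / 2)) (𝓝 (-1)) := by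
  have hslope := hasDerivAt_iff_tendsto_slope.mp (hasDerivAt_cos (π / 2))
  simpa [slope_def_field] using hslope.inv₀ (by simp)

lemma tendsto_xiPrimitive_nhdsLT_pi_div_two :
    Tendsto xiPrimitive (𝓝[<] (π / 2)) (𝓝 (-(π / 2))) := by
  have hfactor : xiPrimitive = fun t => t + (t + π / 2) * sin t * ((t - π / 2) / cos t) := by
    ext t
    rw [xiPrimitive, tan_eq_sin_div_cos]
    ring
  have hid : Tendsto (fun t : ℝ => t) (𝓝[≠] (π / 2)) (𝓝 (π / 2)) :=
    tendsto_nhdsWithin_of_tendsto_nhds tendsto_id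
  have hprefactor : Tendsto (fun t => (t + π / 2) * sin t) (𝓝[≠] (π / 2)) (𝓝 π) :=
    tendsto_nhdsWithin_of_tendsto_nhds <|
      (by fun_prop : Continuous fun t => (t + π / 2) * sin t).tendsto' _ _ (by simp)
  have hlim := hid.add (hprefactor.mul tendsto_sub_pi_div_two_div_cos)
  rw [show π / 2 + π * -1 = -(π / 2) by ring] at hlim
  rw [hfactor]
  exact hlim.mono_left (nhdsWithin_mono _ fun t ht => ne_of_lt ht)

lemma tendsto_xiPrimitive_nhdsGT_neg_pi_div_two :
    Tendsto xiPrimitive (𝓝[>] (-(π / 2))) (𝓝 (π / 2)) := by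
  simpa [Function.comp_def, xiPrimitive_neg] using
    (tendsto_xiPrimitive_nhdsLT_pi_div_two.comp tendsto_neg_nhdsGT_neg).neg

lemma tendsto_xi_nhdsNE_pi_div_two : Tendsto xi (𝓝[≠] (π / 2)) (𝓝 0) := by
  have hsin : ∀ᶠ t in 𝓝[≠] (π / 2), sin t ≠ 0 :=
    (continuous_sin.continuousAt.eventually_ne (by simp)).filter_mono nhdsWithin_le_nhds
  have hcos := eventually_cos_ne_zero_nhdsNE_pi_div_two
  refine HasDerivAt.lhopital_zero_nhdsNE (f' := fun t => 4 * t * cos t ^ 2)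
    (g' := fun t => 2 * cos t * -sin t) (.of_forall hasDerivAt_xi_numerator)
    (.of_forall fun t => by simpa using (hasDerivAt_cos t).fun_pow 2)
    (by filter_upwards [hsin, hcos] with t h1 h2; simp [h1, h2]) ?_ ?_ ?_
  · convert (hasDerivAt_xi_numerator (π / 2)).continuousAt.tendsto.mono_left
      nhdsWithin_le_nhds using 2
    rw [cos_pi_div_two, sin_pi_div_two]
    ring
  · exact tendsto_nhdsWithin_of_tendsto_nhds <| (continuous_cos.pow 2).tendsto' _ _ (by simp)
  · have hratio : (fun t => -(2 * t * cos t) / sin t) =ᶠ[𝓝[≠] (π / 2)]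
        fun t => 4 * t * cos t ^ 2 / (2 * cos t * -sin t) := by
      filter_upwards [hcos] with t ht
      field_simp
      ring
    have hcont : ContinuousAt (fun t => -(2 * t * cos t) / sin t) (π / 2) :=
      ContinuousAt.div (by fun_prop) (by fun_prop) (by simp)
    simpa using (hcont.tendsto.mono_left nhdsWithin_le_nhds).congr' hratio

lemma continuousAt_xi_pi_div_two : ContinuousAt xi (π / 2) := by
  -- `x / 0 = 0` makes `xi` vanish at `π / 2`, as its continuous extension does.
  have hval : xi (π / 2) = 0 := by simp [xi]
  rw [← continuousWithinAt_compl_self, ContinuousWithinAt, hval]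
  exact tendsto_xi_nhdsNE_pi_div_two

lemma continuousOn_xi : ContinuousOn xi (Icc (-(π / 2)) (π / 2)) := by
  intro x hx
  refine ContinuousAt.continuousWithinAt ?_
  rcases hx.1.eq_or_lt with rfl | hleft
  · have heven : xi = xi ∘ Neg.neg := funext fun t => (xi_neg t).symm
    rw [heven]
    exact continuousAt_xi_pi_div_two.comp_of_eq continuous_neg.continuousAt (neg_neg _)
  rcases hx.2.eq_or_lt with rfl | hright
  · exact continuousAt_xi_pi_div_two
  have hcos : cos x ≠ 0 := (cos_pos_of_mem_Ioo ⟨hleft, hright⟩).ne'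
  exact ContinuousAt.div (by fun_prop) (by fun_prop) (pow_ne_zero 2 hcos)

theorem xi_integral : ∫ t in (-(π/2))..(π/2), xi t = -π := by
  have hlt : -(π / 2) < π / 2 := by linarith [pi_pos]
  have hderiv : ∀ x ∈ Ioo (-(π / 2)) (π / 2), HasDerivAt xiPrimitive (xi x) x :=
    fun x hx => hasDerivAt_xiPrimitive (cos_pos_of_mem_Ioo hx).ne'
  have hint : IntervalIntegrable xi MeasureTheory.volume (-(π / 2)) (π / 2) :=
    (uIcc_of_le hlt.le ▸ continuousOn_xi).intervalIntegrable
  rw [intervalIntegral.integral_eq_sub_of_hasDerivAt_of_tendsto hlt hderiv hint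
    tendsto_xiPrimitive_nhdsGT_neg_pi_div_two tendsto_xiPrimitive_nhdsLT_pi_div_two]
  ring
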